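/- arXiv:1405.1237 — 6 statements merged into one kernel-verified Lean document; each statement's English description precedes it below -/
import Mathlib

section
/- Let G be a finite group acting on a finite set X. Then in the formal power series ring ℚ⟦t⟧ one has Σ_{n≥0} |Xⁿ/Gₙ|·tⁿ = (1 − t)^{−|X/G|}, where Xⁿ/Gₙ denotes the set of orbits of the wreath product Gₙ = G ≀ Sₙ acting on Xⁿ. -/
open scoped BigOperators

/-- The action of permutations of `Fin n` on `Fin n → G` by `(s • g) i = g (s⁻¹ i)`,
as a homomorphism to the automorphism group. -/
def permAut (G : Type*) [Group G] (n : ℕ) : Equiv.Perm (Fin n) →* MulAut (Fin n → G) where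
  toFun s :=
    { toFun := fun g => g ∘ s.symm
      invFun := fun g => g ∘ s
      left_inv := fun g => by funext i; simp
      right_inv := fun g => by funext i; simp
      map_mul' := fun g h => rfl }
  map_one' := by ext g i; simp; rfl
  map_mul' s t := by ext g i; simp [Equiv.Perm.mul_def]

/-- The wreath product `G ≀ Sₙ`, the semidirect product of `Gⁿ` by the symmetric
group `Sₙ` permuting the factors. -/
abbrev WreathProduct (G : Type*) [Group G] (n : ℕ) :=
  (Fin n → G) ⋊[permAut G n] Equiv.Perm (Fin n)

/-- The action of the wreath product `G ≀ Sₙ` on `Xⁿ`: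
`((g₁,…,gₙ),s)·(x₁,…,xₙ) = (g₁ x_{s⁻¹(1)},…,gₙ x_{s⁻¹(n)})`. -/
instance wreathMulAction (G : Type*) [Group G] (X : Type*) [MulAction G X] (n : ℕ) :
    MulAction (WreathProduct G n) (Fin n → X) where
  smul a x := fun i => a.left i • x (a.right.symm i)
  one_smul x := by
    funext i
    show (1 : WreathProduct G n).left i • x ((1 : WreathProduct G n).right.symm i) = x i
    simp
    rfl
  mul_smul a b x := by
    funext i
    show (a * b).left i • x ((a * b).right.symm i)
      = a.left i • (fun j => b.left j • x (b.right.symm j)) (a.right.symm i)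
    simp [SemidirectProduct.mul_left, SemidirectProduct.mul_right, permAut, mul_smul,
      Equiv.Perm.mul_def]

theorem wreath_smul_apply (G : Type*) [Group G] (X : Type*) [MulAction G X] (n : ℕ)
    (a : WreathProduct G n) (x : Fin n → X) (i : Fin n) :
    (a • x) i = a.left i • x (a.right.symm i) := rfl

open scoped Classical in
/-- The orbifold Euler characteristic of order `k` of a `G`-space `X`:
`χ⁽ᵏ⁾(X,G) = (1/|G|) Σ_{pairwise commuting (g₀,…,g_k)} |X^⟨g₀,…,g_k⟩|`. -/
noncomputable def orbChi (k : ℕ) (G : Type*) [Group G] (X : Type*) [MulAction G X] : ℚ :=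
  (∑ᶠ g : Fin (k + 1) → G,
      if ∀ i j, Commute (g i) (g j) then
        (Nat.card {x : X // ∀ i, g i • x = x} : ℚ)
      else 0) / (Nat.card G : ℚ)

/-- Generalized binomial coefficient `α choose j` for rational `α`. -/
noncomputable def qchoose (α : ℚ) (j : ℕ) : ℚ :=
  (∏ i ∈ Finset.range j, (α - i)) / (j.factorial : ℚ)

/-- The binomial series `(1 - t^m)^α ∈ ℚ⟦t⟧` for a rational exponent `α`:
its coefficient at `t^(m·j)` is `(-1)^j (α choose j)`. -/
noncomputable def onePowRat (m : ℕ) (α : ℚ) : PowerSeries ℚ :=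
  PowerSeries.mk fun n => if m ∣ n then (-1 : ℚ) ^ (n / m) * qchoose α (n / m) else 0

/-! The `G ≀ Sₙ`-orbit of `x ∈ Xⁿ` is determined by the multiset of `G`-orbits of its
coordinates, and every multiset of size `n` on `X/G` occurs, so `Xⁿ/Gₙ ≃ Sym (X/G) n`.
By stars and bars this has `(k + n - 1).choose n` elements, `k = |X/G|`, and these are the
coefficients of `(1 - t)⁻ᵏ`. -/

open Finset Function MulAction PowerSeries

theorem Finset.univ_val_map_eq_iff_exists_perm {ι β : Type*} [Fintype ι] {f g : ι → β} :
    univ.val.map f = univ.val.map g ↔ ∃ σ : Equiv.Perm ι, g ∘ σ = f := by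
  classical
  constructor
  · intro h
    have hfiber (b : β) : Fintype.card {i // f i = b} = Fintype.card {i // g i = b} := by
      simpa [Multiset.count_map, Fintype.card_subtype, Finset.card_def, eq_comm]
        using congrArg (·.count b) h
    exact ⟨Equiv.ofFiberEquiv fun b => Fintype.equivOfCardEq (hfiber b),
      funext (Equiv.ofFiberEquiv_map _)⟩
  · rintro ⟨σ, rfl⟩
    rw [← Multiset.map_map, Multiset.map_univ_val_equiv]

namespace Sym

variable {α : Type*} {n : ℕ}

def ofFn (f : Fin n → α) : Sym α n := ⟨univ.val.map f, by simp⟩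

theorem ofFn_eq_ofFn_iff {f g : Fin n → α} :
    ofFn f = ofFn g ↔ ∃ σ : Equiv.Perm (Fin n), g ∘ σ = f := by
  rw [← coe_inj]
  exact univ_val_map_eq_iff_exists_perm (ι := Fin n)

theorem ofFn_surjective : Surjective (ofFn : (Fin n → α) → Sym α n) := by
  rintro ⟨s, hs⟩
  induction s using Quotient.inductionOn with
  | h l =>
    obtain rfl : l.length = n := hs
    exact ⟨l.get, Subtype.ext (by simp [ofFn])⟩

end Sym

theorem PowerSeries.inv_one_sub_pow_eq_mk_choose {k : Type*} [Field k] (d : ℕ) :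
    ((1 - X : k⟦X⟧) ^ d)⁻¹ = mk fun n => ((d + n - 1).choose n : k) := by
  rw [PowerSeries.inv_eq_iff_mul_eq_one (by simp)]
  cases d with
  | zero =>
    ext (_ | n) <;> simp [coeff_one]
  | succ d =>
    simp_rw [Nat.add_right_comm d 1, Nat.add_sub_cancel, ← Nat.choose_symm_add]
    exact mk_add_choose_mul_one_sub_pow_eq_one k d

section Wreath

variable (G : Type*) [Group G] {X : Type*} [MulAction G X] {n : ℕ}

def orbitSym (x : Fin n → X) : Sym (orbitRel.Quotient G X) n :=
  Sym.ofFn fun i => Quotient.mk _ (x i)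

theorem orbitSym_eq_orbitSym_iff {x y : Fin n → X} :
    orbitSym G x = orbitSym G y ↔ orbitRel (WreathProduct G n) (Fin n → X) x y := by
  rw [orbitSym, orbitSym, Sym.ofFn_eq_ofFn_iff, orbitRel_apply]
  constructor
  · rintro ⟨σ, hσ⟩
    have (i : Fin n) : ∃ g : G, g • y (σ i) = x i := Quotient.exact (congrFun hσ i).symm
    choose g hg using this
    exact ⟨⟨g, σ⁻¹⟩, funext hg⟩
  · rintro ⟨a, rfl⟩
    exact ⟨a.right.symm, funext fun i => (Quotient.sound (mem_orbit _ (a.left i))).symm⟩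

theorem orbitSym_surjective : Surjective (orbitSym G : (Fin n → X) → _) :=
  Sym.ofFn_surjective.comp Quotient.mk_surjective.comp_left

noncomputable def wreathOrbitEquivSym :
    Quotient (orbitRel (WreathProduct G n) (Fin n → X)) ≃ Sym (orbitRel.Quotient G X) n :=
  (Quotient.congrRight fun _ _ => (orbitSym_eq_orbitSym_iff G).symm).trans
    (Setoid.quotientKerEquivOfSurjective _ (orbitSym_surjective G))

end Wreath

theorem wreath_orbit_count_generating_series_general
    (G : Type*) [Group G] (X : Type*) [MulAction G X] :
    (PowerSeries.mk fun n =>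
        (Nat.card (Quotient (MulAction.orbitRel (WreathProduct G n) (Fin n → X))) : ℚ))
      = ((1 - PowerSeries.X (R := ℚ)) ^ Nat.card (Quotient (MulAction.orbitRel G X)))⁻¹ := by
  rw [inv_one_sub_pow_eq_mk_choose]
  ext n
  rw [coeff_mk, coeff_mk, Nat.card_congr (wreathOrbitEquivSym G), Sym.natCard_sym_eq_choose]

/-- **Macdonald's formula for wreath product quotients.** For a finite group `G` acting on a
finite set `X`, one has in `ℚ⟦t⟧`: `Σ_{n≥0} |Xⁿ/Gₙ| tⁿ = (1 - t)^{-|X/G|}`. -/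
theorem wreath_orbit_count_generating_series
    (G : Type*) [Group G] [Fintype G] (X : Type*) [Fintype X] [MulAction G X] :
    (PowerSeries.mk fun n =>
        (Nat.card (Quotient (MulAction.orbitRel (WreathProduct G n) (Fin n → X))) : ℚ))
      = ((1 - PowerSeries.X (R := ℚ)) ^ Nat.card (Quotient (MulAction.orbitRel G X)))⁻¹ :=
  wreath_orbit_count_generating_series_general G X
end

section
/- Let G' and G'' be finite groups acting on finite sets X' and X'' respectively, and let G'×G'' act on X'×X'' componentwise. Then for every k ≥ 0, χ^(k)(X'×X'', G'×G'') = χ^(k)(X',G') · χ^(k)(X'',G''). -/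
open scoped BigOperators

/-- The componentwise action of `G' × G''` on `X' × X''`. -/
instance prodProdMulAction (G' G'' X' X'' : Type*) [Group G'] [Group G'']
    [MulAction G' X'] [MulAction G'' X''] : MulAction (G' × G'') (X' × X'') where
  smul p x := (p.1 • x.1, p.2 • x.2)
  one_smul x := by
    show ((1 : G' × G'').1 • x.1, (1 : G' × G'').2 • x.2) = x
    simp
  mul_smul p q x := by
    show ((p * q).1 • x.1, (p * q).2 • x.2)
      = ((p.1 • q.1 • x.1, p.2 • q.2 • x.2) : X' × X'')
    simp [mul_smul]

/-!
Both sides are sums over tuples, and a tuple `g` in `G' × G''` is a pair of tuples `(g', g'')`.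
It commutes pairwise iff `g'` and `g''` both do, and its fixed points in `X' × X''` are the
pairs of fixed points of `g'` and `g''`; so each summand, and `|G' × G''|`, factor.
-/

section

variable {ι G G' G'' : Type*} [Group G] [Group G'] [Group G'']

open scoped Classical in
noncomputable def commutingFixedCount (X : Type*) [MulAction G X] (g : ι → G) : ℚ :=
  if ∀ i j, Commute (g i) (g j) then (Nat.card {x : X // ∀ i, g i • x = x} : ℚ) else 0

theorem orbChi_eq_finsum_commutingFixedCount (k : ℕ) (X : Type*) [MulAction G X] :
    orbChi k G X = (∑ᶠ g : Fin (k + 1) → G, commutingFixedCount X g) / Nat.card G := by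
  unfold orbChi commutingFixedCount
  congr!

theorem pairwise_commute_prod_iff (g : ι → G' × G'') :
    (∀ i j, Commute (g i) (g j)) ↔
      (∀ i j, Commute (g i).1 (g j).1) ∧ ∀ i j, Commute (g i).2 (g j).2 := by
  simp only [Prod.commute_iff, forall_and]

variable {X' X'' : Type*} [MulAction G' X'] [MulAction G'' X'']

def fixedPointsProdEquiv (g : ι → G' × G'') :
    {x : X' × X'' // ∀ i, g i • x = x} ≃
      {x : X' // ∀ i, (g i).1 • x = x} × {x : X'' // ∀ i, (g i).2 • x = x} where
  toFun x := (⟨x.1.1, fun i => congrArg Prod.fst (x.2 i)⟩,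
    ⟨x.1.2, fun i => congrArg Prod.snd (x.2 i)⟩)
  invFun p := ⟨(p.1.1, p.2.1), fun i => Prod.ext (p.1.2 i) (p.2.2 i)⟩

theorem commutingFixedCount_prod (g : ι → G' × G'') :
    commutingFixedCount (X' × X'') g =
      commutingFixedCount X' (fun i => (g i).1) * commutingFixedCount X'' (fun i => (g i).2) := by
  unfold commutingFixedCount
  rw [pairwise_commute_prod_iff]
  by_cases h' : ∀ i j, Commute (g i).1 (g j).1 <;> by_cases h'' : ∀ i j, Commute (g i).2 (g j).2
  · rw [if_pos ⟨h', h''⟩, if_pos h', if_pos h'', Nat.card_congr (fixedPointsProdEquiv g),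
      Nat.card_prod, Nat.cast_mul]
  all_goals simp [h', h'']

end

theorem orbChi_prod_general (G' G'' X' X'' : Type*) [Group G'] [Group G''] [Fintype G'] [Fintype G'']
    [MulAction G' X'] [MulAction G'' X''] (k : ℕ) :
    orbChi k (G' × G'') (X' × X'') = orbChi k G' X' * orbChi k G'' X'' := by
  simp only [orbChi_eq_finsum_commutingFixedCount, finsum_eq_sum_of_fintype]
  rw [div_mul_div_comm, Nat.card_prod, Nat.cast_mul, Finset.sum_mul_sum,
    ← Fintype.sum_prod_type']
  congr 1
  exact Fintype.sum_equiv (Equiv.arrowProdEquivProdArrow _ _ _) _ _ commutingFixedCount_prod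

/-- **Multiplicativity of the higher order orbifold Euler characteristic**: for finite groups
`G'`, `G''` acting on finite sets `X'`, `X''` and the componentwise action of `G' × G''` on
`X' × X''`, one has `χ⁽ᵏ⁾(X'×X'', G'×G'') = χ⁽ᵏ⁾(X',G') · χ⁽ᵏ⁾(X'',G'')` for every `k ≥ 0`. -/
theorem orbChi_prod (G' G'' X' X'' : Type*) [Group G'] [Group G''] [Fintype G'] [Fintype G'']
    [Fintype X'] [Fintype X''] [MulAction G' X'] [MulAction G'' X''] (k : ℕ) :
    orbChi k (G' × G'') (X' × X'') = orbChi k G' X' * orbChi k G'' X'' :=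
  orbChi_prod_general G' G'' X' X'' k
end

section
/- Let Ĝ be a finite group acting on a finite set X, let G be a subgroup of Ĝ, and let a be an element of the centre of Ĝ such that Ĝ is generated by G together with a, the element a acts trivially on X, and for some r ≥ 1 one has aʳ ∈ G while aˢ ∉ G for all 0 < s < r (i.e. ⟨a⟩ ∩ G = ⟨aʳ⟩). Then for every k ≥ 0, χ^(k)(X, Ĝ) = r^k · χ^(k)(X, G), where X is regarded as a G-set by restriction of the action. -/
/-!
Since `a` is central, every element of `Ĝ` is uniquely `g * a ^ s` with `g ∈ G` and `s < r`.
Multiplying the entries of a tuple by central elements that act trivially changes neither whether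
the entries commute nor their common fixed points, so each commuting `G`-tuple of length `k + 1`
accounts for `r ^ (k + 1)` commuting `Ĝ`-tuples with the same fixed-point count, while
`|Ĝ| = r * |G|`.
-/

open scoped BigOperators

namespace Subgroup

variable {G : Type*} [Group G]

theorem normal_of_le_center {N : Subgroup G} (hN : N ≤ center G) : N.Normal :=
  ⟨fun n hn g => by rwa [mem_center_iff.mp (hN hn) g, mul_inv_cancel_right]⟩

variable {H : Subgroup G} {a : G} {r : ℕ}

theorem pow_mem_iff_dvd (hr : 0 < r) (har : a ^ r ∈ H) (hs : ∀ s, 0 < s → s < r → a ^ s ∉ H)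
    {n : ℕ} : a ^ n ∈ H ↔ r ∣ n := by
  refine ⟨fun hn => Nat.dvd_of_mod_eq_zero ?_, fun ⟨m, hm⟩ => hm ▸ pow_mul a r m ▸ H.pow_mem har m⟩
  have hsplit : a ^ n = a ^ (n % r) * (a ^ r) ^ (n / r) := by
    rw [← pow_mul, ← pow_add, Nat.mod_add_div]
  have hmod : a ^ (n % r) ∈ H := by
    simpa [hsplit] using H.mul_mem hn (H.inv_mem (H.pow_mem har (n / r)))
  by_contra hne
  exact hs _ (Nat.pos_of_ne_zero hne) (Nat.mod_lt n hr) hmod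

theorem mul_pow_injective (hr : 0 < r) (har : a ^ r ∈ H)
    (hs : ∀ s, 0 < s → s < r → a ^ s ∉ H) :
    Function.Injective fun p : H × Fin r => (p.1 : G) * a ^ (p.2 : ℕ) := by
  rintro ⟨g, s⟩ ⟨g', s'⟩ h
  wlog hle : s ≤ s' generalizing g g' s s'
  · exact (this g' s' g s h.symm (le_of_not_ge hle)).symm
  dsimp only at h
  have hg : (g : G) = g' * a ^ (s' - s : ℕ) := mul_right_cancel <| h.trans <| by
    rw [mul_assoc, ← pow_add, Nat.sub_add_cancel hle]
  have hmem : a ^ (s' - s : ℕ) ∈ H := by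
    rw [eq_inv_mul_of_mul_eq hg.symm]
    exact H.mul_mem (H.inv_mem g'.2) g.2
  have hdiff : (s' - s : ℕ) = 0 :=
    Nat.eq_zero_of_dvd_of_lt ((pow_mem_iff_dvd hr har hs).1 hmem) (by omega)
  have hss : s = s' := Fin.ext (by omega)
  subst hss
  rw [mul_left_inj, ← Subtype.ext_iff] at h
  rw [h]

theorem mul_pow_surjective [Finite G] (ha : a ∈ center G) (hgen : closure (↑H ∪ {a}) = ⊤)
    (hr : 0 < r) (har : a ^ r ∈ H) :
    Function.Surjective fun p : H × Fin r => (p.1 : G) * a ^ (p.2 : ℕ) := by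
  intro x
  rw [closure_union, closure_eq, ← zpowers_eq_closure] at hgen
  have := normal_of_le_center (zpowers_le.mpr ha)
  obtain ⟨g, hg, y, hy, rfl⟩ := mem_sup_of_normal_right.1 (hgen ▸ mem_top x)
  obtain ⟨n, rfl⟩ := mem_powers_iff_mem_zpowers.2 hy
  refine ⟨(⟨g * (a ^ r) ^ (n / r), H.mul_mem hg (H.pow_mem har _)⟩, ⟨n % r, Nat.mod_lt n hr⟩), ?_⟩
  simp only [mul_assoc, ← pow_mul, ← pow_add, Nat.div_add_mod]

end Subgroup

section OrbChi

variable {G : Type*} [Group G] (X : Type*) [MulAction G X]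

theorem commute_mul_central_left_iff {x y c : G} (hc : c ∈ Subgroup.center G) :
    Commute (x * c) y ↔ Commute x y := by
  have hcy : Commute c y := (Subgroup.mem_center_iff.mp hc y).symm
  exact ⟨fun h => by simpa using h.mul_left hcy.inv_left, fun h => h.mul_left hcy⟩

theorem commute_mul_central_iff {x y c d : G} (hc : c ∈ Subgroup.center G)
    (hd : d ∈ Subgroup.center G) : Commute (x * c) (y * d) ↔ Commute x y :=
  (commute_mul_central_left_iff hc).trans <| Commute.symm_iff.trans <|
    (commute_mul_central_left_iff hd).trans Commute.symm_iff

open scoped Classical in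
noncomputable def orbChiSummand {ι : Type*} (g : ι → G) : ℚ :=
  if ∀ i j, Commute (g i) (g j) then (Nat.card {x : X // ∀ i, g i • x = x} : ℚ) else 0

theorem orbChi_eq_sum [Fintype G] (k : ℕ) :
    orbChi k G X = (∑ g : Fin (k + 1) → G, orbChiSummand X g) / Nat.card G := by
  rw [orbChi, finsum_eq_sum_of_fintype]
  unfold orbChiSummand
  congr!

variable {X}

theorem orbChiSummand_mul_central {ι : Type*} (g : ι → G) {c : ι → G}
    (hc : ∀ i, c i ∈ Subgroup.center G) (htriv : ∀ i (x : X), c i • x = x) :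
    orbChiSummand X (g * c) = orbChiSummand X g := by
  classical
  have hcomm : ∀ i j, Commute (g i * c i) (g j * c j) ↔ Commute (g i) (g j) :=
    fun i j => commute_mul_central_iff (hc i) (hc j)
  simp only [orbChiSummand, Pi.mul_apply, mul_smul, htriv]
  exact if_congr (forall₂_congr hcomm) rfl rfl

theorem orbChiSummand_subgroup_coe {ι : Type*} {H : Subgroup G} (g : ι → H) :
    orbChiSummand X (fun i => (g i : G)) = orbChiSummand X g := by
  classical
  have hcomm : ∀ i j, Commute (g i : G) (g j) ↔ Commute (g i) (g j) :=
    fun i j => Submonoid.commute_coe_coe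
  exact if_congr (forall₂_congr hcomm) rfl rfl

theorem sum_orbChiSummand_eq_of_bijective_mul {H : Subgroup G} {ι κ : Type*} [Fintype G]
    [Fintype H] [Fintype ι] [Fintype κ] [DecidableEq κ] {t : ι → G}
    (hc : ∀ i, t i ∈ Subgroup.center G) (htriv : ∀ i (x : X), t i • x = x)
    (hbij : Function.Bijective fun p : H × ι => (p.1 : G) * t p.2) :
    ∑ g : κ → G, orbChiSummand X g =
      Fintype.card ι ^ Fintype.card κ * ∑ g : κ → H, orbChiSummand X g := by
  let E : (κ → H) × (κ → ι) ≃ (κ → G) := (Equiv.arrowProdEquivProdArrow κ _ _).symm.trans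
    (Equiv.piCongrRight fun _ => Equiv.ofBijective _ hbij)
  calc ∑ g : κ → G, orbChiSummand X g
      = ∑ p : (κ → H) × (κ → ι), orbChiSummand X ((fun j => (p.1 j : G)) * t ∘ p.2) :=
        (Fintype.sum_equiv E _ _ fun _ => rfl).symm
    _ = ∑ p : (κ → H) × (κ → ι), orbChiSummand X p.1 := Fintype.sum_congr _ _ fun p => by
        rw [orbChiSummand_mul_central _ (c := t ∘ p.2) (fun j => hc (p.2 j))
          (fun j => htriv (p.2 j)), orbChiSummand_subgroup_coe]
    _ = Fintype.card ι ^ Fintype.card κ * ∑ g : κ → H, orbChiSummand X g := by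
        simp [Fintype.sum_prod_type_right]

theorem orbChi_eq_card_pow_mul_of_bijective_mul (H : Subgroup G) {ι : Type*} [Fintype G]
    [Fintype H] [Fintype ι] {t : ι → G}
    (hc : ∀ i, t i ∈ Subgroup.center G) (htriv : ∀ i (x : X), t i • x = x)
    (hbij : Function.Bijective fun p : H × ι => (p.1 : G) * t p.2) (k : ℕ) :
    orbChi k G X = Fintype.card ι ^ k * orbChi k H X := by
  have hcard : Nat.card G = Nat.card H * Fintype.card ι := by
    rw [← Nat.card_congr (Equiv.ofBijective _ hbij), Nat.card_prod,
      Nat.card_eq_fintype_card (α := ι)]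
  have : Nonempty ι := ⟨(hbij.2 1).choose.2⟩
  have hι : (Fintype.card ι : ℚ) ≠ 0 := Nat.cast_ne_zero.mpr Fintype.card_ne_zero
  have hH : (Nat.card H : ℚ) ≠ 0 := Nat.cast_ne_zero.mpr Nat.card_pos.ne'
  rw [orbChi_eq_sum, orbChi_eq_sum, sum_orbChiSummand_eq_of_bijective_mul hc htriv hbij, hcard,
    Fintype.card_fin]
  push_cast
  field_simp
  ring

end OrbChi

theorem orbChi_extend_by_central_general
    (Ghat : Type*) [Group Ghat] [Fintype Ghat] (X : Type*) [MulAction Ghat X]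
    (G : Subgroup Ghat) (a : Ghat)
    (hcenter : a ∈ Subgroup.center Ghat)
    (hgen : Subgroup.closure ((G : Set Ghat) ∪ {a}) = ⊤)
    (htriv : ∀ x : X, a • x = x)
    (r : ℕ) (hr : 1 ≤ r) (har : a ^ r ∈ G)
    (hs : ∀ s : ℕ, 0 < s → s < r → a ^ s ∉ G)
    (k : ℕ) :
    orbChi k Ghat X = (r : ℚ) ^ k * orbChi k G X := by
  classical
  have hbij : Function.Bijective fun p : G × Fin r => (p.1 : Ghat) * a ^ (p.2 : ℕ) :=
    ⟨G.mul_pow_injective hr har hs, G.mul_pow_surjective hcenter hgen hr har⟩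
  have hpow_triv (n : ℕ) (x : X) : a ^ n • x = x :=
    (MulAction.stabilizer Ghat x).pow_mem (MulAction.mem_stabilizer_iff.mpr (htriv x)) n
  simpa using orbChi_eq_card_pow_mul_of_bijective_mul G
    (fun s : Fin r => (Subgroup.center Ghat).pow_mem hcenter s) (fun s => hpow_triv s) hbij k

/-- Let `Ĝ` be a finite group acting on a finite set `X`, `G ≤ Ĝ` a subgroup and `a` a central
element of `Ĝ` such that `Ĝ` is generated by `G` together with `a`, the element `a` acts
trivially on `X`, and for some `r ≥ 1` one has `aʳ ∈ G` while `aˢ ∉ G` for `0 < s < r`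
(i.e. `⟨a⟩ ∩ G = ⟨aʳ⟩`). Then `χ⁽ᵏ⁾(X, Ĝ) = rᵏ · χ⁽ᵏ⁾(X, G)` for every `k ≥ 0`,
where `X` is a `G`-set by restriction. -/
theorem orbChi_extend_by_central
    (Ghat : Type*) [Group Ghat] [Fintype Ghat] (X : Type*) [Fintype X] [MulAction Ghat X]
    (G : Subgroup Ghat) (a : Ghat)
    (hcenter : a ∈ Subgroup.center Ghat)
    (hgen : Subgroup.closure ((G : Set Ghat) ∪ {a}) = ⊤)
    (htriv : ∀ x : X, a • x = x)
    (r : ℕ) (hr : 1 ≤ r) (har : a ^ r ∈ G)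
    (hs : ∀ s : ℕ, 0 < s → s < r → a ^ s ∉ G)
    (k : ℕ) :
    orbChi k Ghat X = (r : ℚ) ^ k * orbChi k G X :=
  orbChi_extend_by_central_general Ghat X G a hcenter hgen htriv r hr har hs k
end

section
/- Let G be a finite group acting on a finite set X. For a subgroup H ≤ G let X^([H]) denote the set of points x ∈ X whose stabilizer subgroup is conjugate to H; this set is G-invariant. Then for every k ≥ 0, χ^(k)(X,G) = Σ_{[H]} |X^([H])/G| · χ^(k)(G/H, G), where the sum is over the conjugacy classes [H] of subgroups of G, and G acts on the coset space G/H by left translation. -/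
open scoped BigOperators

/-- The conjugate subgroup `g H g⁻¹`. -/
def conjSub {G : Type*} [Group G] (g : G) (H : Subgroup G) : Subgroup G :=
  H.map (MulAut.conj g).toMonoidHom

/-!
`χ⁽ᵏ⁾` sees a `G`-set only through fixed-point counts, which add up over disjoint unions and
are preserved by equivariant bijections. The class formula `X ≃ Σ_ω G ⧸ Stab(x_ω)` therefore
splits `χ⁽ᵏ⁾(X,G)` into a sum over orbits, and `aH ↦ agH` is an equivariant bijection
`G ⧸ gHg⁻¹ ≃ G ⧸ H`, so an orbit contributes `χ⁽ᵏ⁾(G/H, G)` for its orbit type `[H]`.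
Grouping the orbits by type gives the formula.
-/

open MulAction

local notation "SubgroupConjClasses " G:max => Quot fun H K : Subgroup G => ∃ g : G, conjSub g H = K

section Conjugation

variable {G : Type*} [Group G]

lemma mem_conjSub {g x : G} {H : Subgroup G} : x ∈ conjSub g H ↔ g⁻¹ * x * g ∈ H := by
  rw [conjSub, Subgroup.mem_map_equiv, MulAut.conj_symm_apply]

lemma conjSub_one (H : Subgroup G) : conjSub 1 H = H := by
  ext; simp [mem_conjSub]

lemma conjSub_conjSub (g h : G) (H : Subgroup G) :
    conjSub g (conjSub h H) = conjSub (g * h) H := by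
  ext; simp [mem_conjSub, mul_assoc]

lemma equivalence_conjSub : Equivalence fun H K : Subgroup G => ∃ g : G, conjSub g H = K where
  refl H := ⟨1, conjSub_one H⟩
  symm := by
    rintro H _ ⟨g, rfl⟩
    exact ⟨g⁻¹, by rw [conjSub_conjSub, inv_mul_cancel, conjSub_one]⟩
  trans := by
    rintro H _ _ ⟨g, rfl⟩ ⟨h, rfl⟩
    exact ⟨h * g, (conjSub_conjSub h g H).symm⟩

lemma quot_mk_conjSub_eq_iff {H : Subgroup G} {q : SubgroupConjClasses G} :
    Quot.mk _ H = q ↔ ∃ g : G, conjSub g q.out = H := by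
  have h := equivalence_conjSub.quot_mk_eq_iff q.out H
  rw [Quot.out_eq] at h
  exact eq_comm.trans h

lemma stabilizer_smul_eq_conjSub {X : Type*} [MulAction G X] (g : G) (x : X) :
    stabilizer G (g • x) = conjSub g (stabilizer G x) :=
  stabilizer_smul_eq_stabilizer_map_conj g x

end Conjugation

lemma Sigma.smul_mk_eq_self_iff {M ι : Type*} {Y : ι → Type*} [∀ i, SMul M (Y i)] (a : M) (i : ι)
    (y : Y i) : a • (⟨i, y⟩ : Σ i, Y i) = ⟨i, y⟩ ↔ a • y = y := by
  simp [Sigma.smul_mk]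

section OrbChi

variable {G : Type*} [Group G] (k : ℕ)

lemma orbChi_congr {X Y : Type*} [MulAction G X] [MulAction G Y] (e : X ≃ Y)
    (he : ∀ (g : G) (x : X), e (g • x) = g • e x) : orbChi k G X = orbChi k G Y := by
  unfold orbChi
  congr 1
  refine finsum_congr fun g => ?_
  split_ifs
  · refine congrArg _ (Nat.card_congr (e.subtypeEquiv fun x => ?_))
    simp only [← he, e.apply_eq_iff_eq]
  · rfl

lemma orbChi_sigma [Finite G] {ι : Type*} [Fintype ι] (Y : ι → Type*) [∀ i, MulAction G (Y i)]
    [∀ i, Finite (Y i)] : orbChi k G (Σ i, Y i) = ∑ i, orbChi k G (Y i) := by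
  have := Fintype.ofFinite G
  simp only [orbChi, finsum_eq_sum_of_fintype, ← Finset.sum_div]
  rw [Finset.sum_comm]
  congr 1
  refine Finset.sum_congr rfl fun g _ => ?_
  split_ifs
  · have e : {p : Σ i, Y i // ∀ j, g j • p = p} ≃ Σ i, {y : Y i // ∀ j, g j • y = y} :=
      { toFun p := ⟨p.1.1, p.1.2, fun j => (Sigma.smul_mk_eq_self_iff _ _ _).1 (p.2 j)⟩
        invFun q := ⟨⟨q.1, q.2.1⟩, fun j => (Sigma.smul_mk_eq_self_iff _ _ _).2 (q.2.2 j)⟩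
        left_inv _ := rfl
        right_inv _ := rfl }
    rw [Nat.card_congr e, Nat.card_sigma]
    push_cast
    rfl
  · simp

lemma orbChi_eq_sum_orbChi_quotient_stabilizer [Finite G] {X : Type*} [MulAction G X] [Finite X]
    [Fintype (orbitRel.Quotient G X)] :
    orbChi k G X = ∑ ω : orbitRel.Quotient G X, orbChi k G (G ⧸ stabilizer G ω.out) := by
  rw [← orbChi_sigma]
  refine (orbChi_congr k (selfEquivSigmaOrbitsQuotientStabilizer G X).symm ?_).symm
  rintro g ⟨ω, a⟩
  exact ofQuotientStabilizer_smul G ω.out g a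

lemma orbChi_quotient_conjSub (g : G) (H : Subgroup G) :
    orbChi k G (G ⧸ conjSub g H) = orbChi k G (G ⧸ H) := by
  refine orbChi_congr k (Quotient.congr (Equiv.mulRight g) fun a b => ?_) ?_
  · rw [QuotientGroup.leftRel_apply, QuotientGroup.leftRel_apply, mem_conjSub]
    simp only [Equiv.coe_mulRight, mul_inv_rev, mul_assoc]
  · intro c x
    induction x using QuotientGroup.induction_on with
    | H a => exact congrArg QuotientGroup.mk (mul_assoc c a g)

lemma orbChi_quotient_out_quot_mk (H : Subgroup G) :
    orbChi k G (G ⧸ (Quot.mk _ H : SubgroupConjClasses G).out) = orbChi k G (G ⧸ H) := by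
  obtain ⟨g, hg⟩ := quot_mk_conjSub_eq_iff.1 (rfl : (Quot.mk _ H : SubgroupConjClasses G) = _)
  rw [← orbChi_quotient_conjSub k g, hg]

end OrbChi

section OrbitType

variable (G : Type*) [Group G] {X : Type*} [MulAction G X]

def orbitType : orbitRel.Quotient G X → SubgroupConjClasses G :=
  Quotient.lift (fun x => Quot.mk _ (stabilizer G x)) fun x y hxy => by
    obtain ⟨g, rfl⟩ := orbitRel_apply.1 hxy
    exact (Quot.sound ⟨g, (stabilizer_smul_eq_conjSub g y).symm⟩).symm

lemma orbitType_mk (x : X) : orbitType G ⟦x⟧ = Quot.mk _ (stabilizer G x) := rfl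

lemma image_mk_stabilizer_conj_eq_preimage_orbitType (q : SubgroupConjClasses G) :
    Quotient.mk (orbitRel G X) '' {x | ∃ g : G, stabilizer G x = conjSub g q.out} =
      orbitType G ⁻¹' {q} := by
  refine (congrArg _ (Set.ext fun x => ?_)).trans (Set.image_preimage_eq _ Quotient.mk_surjective)
  rw [Set.mem_preimage, Set.mem_preimage, Set.mem_singleton_iff, orbitType_mk,
    quot_mk_conjSub_eq_iff]
  exact exists_congr fun _ => eq_comm

variable (k : ℕ)

lemma orbChi_quotient_stabilizer_out (ω : orbitRel.Quotient G X) :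
    orbChi k G (G ⧸ stabilizer G ω.out) = orbChi k G (G ⧸ (orbitType G ω).out) := by
  conv_rhs => rw [← Quotient.out_eq ω]
  rw [orbitType_mk, orbChi_quotient_out_quot_mk]

lemma orbChi_eq_sum_card_orbitType [Finite G] [Finite X] [Fintype (orbitRel.Quotient G X)]
    [Fintype (SubgroupConjClasses G)] :
    orbChi k G X = ∑ q, Nat.card (orbitType G (X := X) ⁻¹' {q}) * orbChi k G (G ⧸ q.out) := by
  classical
  simp only [orbChi_eq_sum_orbChi_quotient_stabilizer, orbChi_quotient_stabilizer_out]
  rw [← Fintype.sum_fiberwise' (orbitType G) fun q => orbChi k G (G ⧸ q.out)]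
  simp only [Finset.sum_const, Finset.card_univ, nsmul_eq_mul, Nat.card_eq_fintype_card]
  rfl

end OrbitType

/-- **Decomposition of the orbifold Euler characteristic by orbit types.** For a finite group
`G` acting on a finite set `X` and any `k ≥ 0`,
`χ⁽ᵏ⁾(X,G) = Σ_{[H]} |X^([H])/G| · χ⁽ᵏ⁾(G/H, G)`, where the sum runs over the conjugacy
classes `[H]` of subgroups of `G` (formalized as the quotient of `Subgroup G` by the
conjugation relation, with `Quot.out` picking a representative of each class),
`X^([H])` is the (G-invariant) set of points whose stabilizer is conjugate to `H`,
`X^([H])/G` is its image in the orbit space `X/G`, and `G` acts on `G ⧸ H` by left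
translation. -/
theorem orbChi_orbit_type_decomposition
    (G : Type*) [Group G] [Fintype G] (X : Type*) [Fintype X] [MulAction G X] (k : ℕ) :
    orbChi k G X =
      ∑ᶠ q : Quot (fun H K : Subgroup G => ∃ g : G, conjSub g H = K),
        (Nat.card ↥(Quotient.mk (MulAction.orbitRel G X) ''
            {x : X | ∃ g : G, MulAction.stabilizer G x = conjSub g q.out}) : ℚ)
          * orbChi k G (G ⧸ q.out) := by
  have := Fintype.ofFinite (orbitRel.Quotient G X)
  have := Fintype.ofFinite (SubgroupConjClasses G)
  simp only [finsum_eq_sum_of_fintype, image_mk_stabilizer_conj_eq_preimage_orbitType]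
  exact orbChi_eq_sum_card_orbitType G k
end

section
/- Let G be a finite group acting on a finite set X. Then (1/|G|)·Σ_{(g₀,g₁) ∈ G×G, g₀g₁ = g₁g₀} |X^⟨g₀,g₁⟩| = Σ_{[g]} |X^⟨g⟩ / C_G(g)|, where the sum on the right is over the conjugacy classes [g] of elements of G, C_G(g) = {h ∈ G : h⁻¹gh = g} is the centralizer of g, and X^⟨g⟩/C_G(g) is the set of orbits of the centralizer C_G(g) acting on the fixed point set X^⟨g⟩ (the right-hand side is independent of the chosen representatives g). -/
open scoped BigOperators

/-- The centralizer `C_G(g)` acts on the fixed point set `X^⟨g⟩ = {x ∈ X : g x = x}`. -/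
instance centralizerFixedAction (G : Type*) [Group G] (X : Type*) [MulAction G X] (g : G) :
    MulAction ↥(Subgroup.centralizer {g}) {x : X // g • x = x} where
  smul h x := ⟨(h : G) • (x : X), by
    have hc : g * (h : G) = (h : G) * g := h.2 g (Set.mem_singleton g)
    rw [← mul_smul, hc, mul_smul, x.2]⟩
  one_smul x := by
    apply Subtype.ext
    show ((1 : Subgroup.centralizer {g}) : G) • (x : X) = (x : X)
    simp
  mul_smul h h' x := by
    apply Subtype.ext
    show ((h * h' : Subgroup.centralizer {g}) : G) • (x : X)
      = (h : G) • ((h' : G) • (x : X))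
    simp [mul_smul]

/-!
For each `g`, Burnside's lemma for `C_G(g)` acting on `X^⟨g⟩` gives
`∑_{h ∈ C_G(g)} |X^⟨g,h⟩| = |C_G(g)| · |X^⟨g⟩ / C_G(g)|`. The left side is invariant under
conjugating `g`, so the sum over `g ∈ G` collects into conjugacy classes, and the class of `g`
contributes `|[g]| · |C_G(g)| · |X^⟨g⟩ / C_G(g)| = |G| · |X^⟨g⟩ / C_G(g)|`.
-/

open MulAction Subgroup

section

variable {G : Type*} [Group G]

theorem nat_card_isConj_mul_nat_card_centralizer (g : G) :
    Nat.card {a : G // IsConj g a} * Nat.card (centralizer {g}) = Nat.card G := by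
  have hclass : {a : G // IsConj g a} ≃ orbit (ConjAct G) g :=
    Equiv.subtypeEquivRight fun a => by rw [ConjAct.mem_orbit_conjAct, isConj_comm]
  rw [nat_card_centralizer_nat_card_stabilizer, Nat.card_congr hclass, Nat.card_coe_set_eq,
    ← index_stabilizer, mul_comm, card_mul_index]
  exact Nat.card_congr ConjAct.ofConjAct.toEquiv

theorem quot_mk_isConj_eq_iff (q : Quot (IsConj (α := G))) (g : G) :
    Quot.mk IsConj g = q ↔ IsConj q.out g := by
  nth_rw 1 [← Quot.out_eq q]
  rw [Quot.eq, Equivalence.eqvGen_iff ⟨IsConj.refl, IsConj.symm, IsConj.trans⟩, isConj_comm]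

theorem sum_eq_sum_quot_isConj {M : Type*} [AddCommMonoid M] [Fintype G]
    [Fintype (Quot (IsConj (α := G)))] (f : G → M) (hf : ∀ k g, f (k * g * k⁻¹) = f g) :
    ∑ g, f g = ∑ q : Quot (IsConj (α := G)), Nat.card {a : G // IsConj q.out a} • f q.out := by
  classical
  rw [← Finset.sum_fiberwise Finset.univ (Quot.mk IsConj) f]
  refine Finset.sum_congr rfl fun q _ => ?_
  simp_rw [quot_mk_isConj_eq_iff]
  have hconst : ∀ g ∈ Finset.univ.filter (IsConj q.out), f g = f q.out := fun g hg => by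
    obtain ⟨k, rfl⟩ := isConj_iff.mp (Finset.mem_filter.mp hg).2
    exact hf k q.out
  rw [Finset.sum_congr rfl hconst, Finset.sum_const, Nat.card_eq_fintype_card,
    Fintype.card_subtype]

variable {X : Type*} [MulAction G X]

def fixedByCentralizerEquiv (g : G) (h : centralizer {g}) :
    fixedBy {x : X // g • x = x} h ≃ {x : X // g • x = x ∧ (h : G) • x = x} where
  toFun x := ⟨x.1.1, x.1.2, congrArg Subtype.val x.2⟩
  invFun x := ⟨⟨x.1, x.2.1⟩, Subtype.ext x.2.2⟩

theorem sum_ite_commute_card_fixed_eq_card_orbits_mul_card_centralizer [Fintype G]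
    [DecidableEq G] [Finite X] (g : G) :
    ∑ g₁ : G, (if g * g₁ = g₁ * g then Nat.card {x : X // g • x = x ∧ g₁ • x = x} else 0) =
      Nat.card (Quotient (orbitRel (centralizer {g}) {x : X // g • x = x})) *
        Nat.card (centralizer {g}) := by
  classical
  have := Fintype.ofFinite X
  have := Fintype.ofFinite (Quotient (orbitRel (centralizer {g}) {x : X // g • x = x}))
  rw [← Finset.sum_filter, Finset.sum_subtype (p := (· ∈ centralizer {g})) _
    fun g₁ => by simp [mem_centralizer_singleton_iff, eq_comm]]
  simp only [← Nat.card_congr (fixedByCentralizerEquiv g _), Nat.card_eq_fintype_card]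
  exact sum_card_fixedBy_eq_card_orbits_mul_card_group (centralizer {g}) {x : X // g • x = x}

theorem nat_card_fixed_pair_conj (k g g₁ : G) :
    Nat.card {x : X // (k * g * k⁻¹) • x = x ∧ (k * g₁ * k⁻¹) • x = x} =
      Nat.card {x : X // g • x = x ∧ g₁ • x = x} :=
  Nat.card_congr (Equiv.subtypeEquiv (toPerm k) fun x => by simp [mul_smul]).symm

theorem sum_ite_commute_card_fixed_conj [Fintype G] [DecidableEq G] (k g : G) :
    ∑ g₁ : G, (if (k * g * k⁻¹) * g₁ = g₁ * (k * g * k⁻¹) then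
        Nat.card {x : X // (k * g * k⁻¹) • x = x ∧ g₁ • x = x} else 0) =
      ∑ g₁ : G, (if g * g₁ = g₁ * g then Nat.card {x : X // g • x = x ∧ g₁ • x = x} else 0) := by
  refine Eq.symm <| Fintype.sum_equiv (MulAut.conj k).toEquiv _ _ fun g₁ => ?_
  have hcomm : Commute (MulAut.conj k g) (MulAut.conj k g₁) ↔ Commute g g₁ :=
    commute_map_iff (MulAut.conj k).injective
  simp only [MulEquiv.toEquiv_eq_coe, MulEquiv.coe_toEquiv, MulAut.conj_apply] at hcomm ⊢
  rw [nat_card_fixed_pair_conj]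
  exact if_congr hcomm.symm rfl rfl

end

open scoped Classical in
/-- For a finite group `G` acting on a finite set `X`:
`(1/|G|) Σ_{(g₀,g₁) commuting} |X^⟨g₀,g₁⟩| = Σ_{[g]} |X^⟨g⟩ / C_G(g)|`, where the sum on the
right runs over the conjugacy classes of elements of `G` (formalized as the quotient of `G` by
the conjugation relation `IsConj`, with `Quot.out` picking a representative — the summand does
not depend on this choice), and `X^⟨g⟩/C_G(g)` is the orbit space of the centralizer `C_G(g)`
acting on the fixed point set `X^⟨g⟩`. -/
theorem orbifold_euler_char_eq_sum_over_conj_classes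
    (G : Type*) [Group G] [Fintype G] (X : Type*) [Fintype X] [MulAction G X] :
    (∑ᶠ p : G × G,
        if p.1 * p.2 = p.2 * p.1 then
          (Nat.card {x : X // p.1 • x = x ∧ p.2 • x = x} : ℚ)
        else 0) / (Nat.card G : ℚ)
      = ∑ᶠ q : Quot (IsConj (α := G)),
          (Nat.card (Quotient (MulAction.orbitRel ↥(Subgroup.centralizer {q.out})
              {x : X // q.out • x = x})) : ℚ) := by
  have := Fintype.ofFinite (Quot (IsConj (α := G)))
  have hcount : ∑ g : G, ∑ g₁ : G,
      (if g * g₁ = g₁ * g then Nat.card {x : X // g • x = x ∧ g₁ • x = x} else 0) =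
      (∑ q : Quot (IsConj (α := G)), Nat.card (Quotient (orbitRel (centralizer {q.out})
        {x : X // q.out • x = x}))) * Nat.card G := by
    rw [sum_eq_sum_quot_isConj _ sum_ite_commute_card_fixed_conj, Finset.sum_mul]
    refine Finset.sum_congr rfl fun q _ => ?_
    rw [sum_ite_commute_card_fixed_eq_card_orbits_mul_card_centralizer,
      ← nat_card_isConj_mul_nat_card_centralizer q.out, smul_eq_mul]
    ring
  rw [finsum_eq_sum_of_fintype, finsum_eq_sum_of_fintype, Fintype.sum_prod_type,
    div_eq_iff (Nat.cast_ne_zero.mpr Nat.card_pos.ne')]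
  exact_mod_cast hcount
end

section
/- Let G be a finite group acting on a finite set X and let k ≥ 0. Then the orbifold Euler characteristic of order k is a nonnegative integer; that is, |G| divides Σ_{(g₀,…,g_k) ∈ G^{k+1} pairwise commuting} |X^⟨g₀,…,g_k⟩|. -/
open scoped BigOperators

/-!
`G` acts by simultaneous conjugation on the pairs `(f, x)` of a pairwise commuting `k`-tuple `f`
and a common fixed point `x`. An element `g` stabilises `(f, x)` exactly when `(g, f)` is a
pairwise commuting `(k + 1)`-tuple fixing `x`, so by Burnside's lemma the sum defining `orbChi`
is `|G|` times the number of orbits of this action.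
-/

open MulAction

theorem MulAction.card_smul_eq_self_eq_card_orbits_mul_card (G Y : Type*) [Group G]
    [MulAction G Y] :
    Nat.card {p : G × Y // p.1 • p.2 = p.2} =
      Nat.card (Quotient (orbitRel G Y)) * Nat.card G := by
  rw [← Nat.card_prod]
  exact Nat.card_congr ((Equiv.subtypeProdEquivSigmaSubtype fun g y => g • y = y).trans
    (sigmaFixedByEquivOrbitsProdGroup G Y))

theorem finsum_ite_card_eq_card_subtype_prod {α β : Type*} [Finite α] [Finite β]
    (P : α → Prop) [DecidablePred P] (Q : α → β → Prop) :
    ∑ᶠ a, (if P a then Nat.card {b // Q a b} else 0) =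
      Nat.card {p : α × β // P p.1 ∧ Q p.1 p.2} := by
  have := Fintype.ofFinite α
  rw [finsum_eq_sum_of_fintype,
    Nat.card_congr (Equiv.subtypeProdEquivSigmaSubtype fun a b => P a ∧ Q a b), Nat.card_sigma]
  refine Finset.sum_congr rfl fun a _ => ?_
  by_cases h : P a <;> simp [h]

theorem Fin.forall₂_commute_iff_succ {M : Type*} [Mul M] {n : ℕ} (f : Fin (n + 1) → M) :
    (∀ i j, Commute (f i) (f j)) ↔
      (∀ i : Fin n, Commute (f 0) (f i.succ)) ∧
        ∀ i j : Fin n, Commute (f i.succ) (f j.succ) := by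
  simp only [Fin.forall_fin_succ, Commute.refl, true_and, forall_and]
  exact ⟨And.right, fun h => ⟨fun i => (h.1 i).symm, h⟩⟩

section

variable (G : Type*) [Group G] (X : Type*) [MulAction G X]

@[ext]
structure CommutingTupleFixedPoint (k : ℕ) where
  tuple : Fin k → G
  point : X
  commute : ∀ i j, Commute (tuple i) (tuple j)
  fixed : ∀ i, tuple i • point = point

namespace CommutingTupleFixedPoint

variable {G X} {k : ℕ}

instance : SMul G (CommutingTupleFixedPoint G X k) where
  smul g p :=
    { tuple := fun i => g * p.tuple i * g⁻¹
      point := g • p.point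
      commute := fun i j => by
        simpa only [MulAut.conj_apply] using (p.commute i j).map (MulAut.conj g)
      fixed := fun i => by simp only [mul_smul, inv_smul_smul, p.fixed i] }

@[simp]
theorem smul_tuple (g : G) (p : CommutingTupleFixedPoint G X k) (i : Fin k) :
    (g • p).tuple i = g * p.tuple i * g⁻¹ := rfl

@[simp]
theorem smul_point (g : G) (p : CommutingTupleFixedPoint G X k) : (g • p).point = g • p.point :=
  rfl

instance : MulAction G (CommutingTupleFixedPoint G X k) where
  one_smul p := by ext <;> simp
  mul_smul a b p := by ext <;> simp [mul_smul, mul_assoc]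

theorem smul_eq_self_iff (g : G) (p : CommutingTupleFixedPoint G X k) :
    g • p = p ↔ (∀ i, Commute g (p.tuple i)) ∧ g • p.point = p.point := by
  simp only [CommutingTupleFixedPoint.ext_iff, funext_iff, smul_tuple, smul_point,
    mul_inv_eq_iff_eq_mul]
  rfl

def consEquiv :
    CommutingTupleFixedPoint G X (k + 1) ≃
      {q : G × CommutingTupleFixedPoint G X k // q.1 • q.2 = q.2} where
  toFun p :=
    have hcomm := (Fin.forall₂_commute_iff_succ p.tuple).mp p.commute
    have hfix := Fin.forall_fin_succ.mp p.fixed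
    ⟨(p.tuple 0, ⟨Fin.tail p.tuple, p.point, hcomm.2, hfix.2⟩),
      (smul_eq_self_iff _ _).mpr ⟨hcomm.1, hfix.1⟩⟩
  invFun q :=
    have hstab := (smul_eq_self_iff _ _).mp q.2
    { tuple := Fin.cons q.1.1 q.1.2.tuple
      point := q.1.2.point
      commute :=
        (Fin.forall₂_commute_iff_succ _).mpr (by simpa using ⟨hstab.1, q.1.2.commute⟩)
      fixed := Fin.forall_fin_succ.mpr (by simpa using ⟨hstab.2, q.1.2.fixed⟩) }
  left_inv p := by ext <;> simp
  right_inv q := rfl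

open scoped Classical in
theorem card_eq_finsum [Finite G] [Finite X] :
    Nat.card (CommutingTupleFixedPoint G X k) =
      ∑ᶠ g : Fin k → G,
        if ∀ i j, Commute (g i) (g j) then Nat.card {x : X // ∀ i, g i • x = x} else 0 := by
  rw [finsum_ite_card_eq_card_subtype_prod]
  exact Nat.card_congr
    { toFun p := ⟨(p.tuple, p.point), p.commute, p.fixed⟩
      invFun q := ⟨q.1.1, q.1.2, q.2.1, q.2.2⟩ }

theorem card_succ :
    Nat.card (CommutingTupleFixedPoint G X (k + 1)) =
      Nat.card (Quotient (orbitRel G (CommutingTupleFixedPoint G X k))) * Nat.card G := by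
  rw [Nat.card_congr consEquiv, card_smul_eq_self_eq_card_orbits_mul_card]

end CommutingTupleFixedPoint

open scoped Classical in
theorem finsum_card_fixed_commuting_eq_card_orbits_mul_card (k : ℕ) [Finite G] [Finite X] :
    ∑ᶠ g : Fin (k + 1) → G,
        (if ∀ i j, Commute (g i) (g j) then Nat.card {x : X // ∀ i, g i • x = x} else 0) =
      Nat.card (Quotient (orbitRel G (CommutingTupleFixedPoint G X k))) * Nat.card G := by
  rw [← CommutingTupleFixedPoint.card_eq_finsum, CommutingTupleFixedPoint.card_succ]

open scoped Classical in
theorem orbChi_eq_card_orbits (k : ℕ) [Finite G] [Finite X] :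
    orbChi k G X = Nat.card (Quotient (orbitRel G (CommutingTupleFixedPoint G X k))) := by
  have hG : (Nat.card G : ℚ) ≠ 0 := Nat.cast_ne_zero.mpr Nat.card_pos.ne'
  have hsum := congrArg (Nat.cast : ℕ → ℚ)
    (finsum_card_fixed_commuting_eq_card_orbits_mul_card G X k)
  simp only [Nat.cast_finsum, Nat.cast_ite, Nat.cast_zero, Nat.cast_mul] at hsum
  rw [orbChi, hsum, mul_div_cancel_right₀ _ hG]

end

open scoped Classical in
/-- **Integrality of the higher order orbifold Euler characteristic.** For a finite group `G`
acting on a finite set `X` and `k ≥ 0`, the orbifold Euler characteristic of order `k` is a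
nonnegative integer; that is, `|G|` divides
`Σ_{pairwise commuting (g₀,…,g_k) ∈ G^{k+1}} |X^⟨g₀,…,g_k⟩|`. -/
theorem orbChi_integral
    (G : Type*) [Group G] [Fintype G] (X : Type*) [Fintype X] [MulAction G X] (k : ℕ) :
    (Nat.card G ∣
        ∑ᶠ g : Fin (k + 1) → G,
          if ∀ i j, Commute (g i) (g j) then Nat.card {x : X // ∀ i, g i • x = x} else 0)
      ∧ ∃ m : ℕ, orbChi k G X = m := by
  rw [finsum_card_fixed_commuting_eq_card_orbits_mul_card]
  exact ⟨dvd_mul_left _ _, _, orbChi_eq_card_orbits G X k⟩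
end
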